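/- arXiv:1011.4492 — 5 statements merged into one kernel-verified Lean document; each statement's English description precedes it below -/
import Mathlib

section
/- Let p be a prime, H a positive integer, and X > 1 a real number with X·H < p. For integers 0 ≤ t < q, define the real interval I(q,t) = ( p·t/q , (H + p·t)/q ]. Then the intervals I(q,t), taken over all pairs of integers (q,t) with 0 ≤ t < q ≤ X and gcd(t,q) = 1, are pairwise disjoint. Likewise, the intervals J(q,t) = [ −(H + p·t)/q , −p·t/q ), over the same index set, are pairwise disjoint. -/
private lemma frac_ne (q₁ t₁ q₂ t₂ : ℤ) (hq₁ : 0 < q₁) (hq₂ : 0 < q₂)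
    (hg₁ : Int.gcd t₁ q₁ = 1) (hg₂ : Int.gcd t₂ q₂ = 1)
    (hne : (q₁, t₁) ≠ (q₂, t₂)) : t₁ * q₂ ≠ t₂ * q₁ := by
  intro h
  have hc₁ : IsCoprime t₁ q₁ := Int.isCoprime_iff_gcd_eq_one.mpr hg₁
  have hc₂ : IsCoprime t₂ q₂ := Int.isCoprime_iff_gcd_eq_one.mpr hg₂
  have hd₁ : q₁ ∣ q₂ := hc₁.symm.dvd_of_dvd_mul_left ⟨t₂, by linarith⟩
  have hd₂ : q₂ ∣ q₁ := hc₂.symm.dvd_of_dvd_mul_left ⟨t₁, by linarith⟩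
  have hq : q₁ = q₂ := Int.dvd_antisymm hq₁.le hq₂.le hd₁ hd₂
  subst hq
  have ht : t₁ = t₂ := by
    have := mul_right_cancel₀ (ne_of_gt hq₁) h
    exact this
  exact hne (by rw [ht])

private lemma core (p H : ℕ) (hH : 0 < H) (X : ℝ) (hXH : X * (H : ℝ) < (p : ℝ))
    (q₁ t₁ q₂ t₂ : ℤ) (ht₁ : 0 ≤ t₁) (h1 : t₁ < q₁)
    (h2 : t₂ < q₂) (hq₂X : (q₂ : ℝ) ≤ X)
    (hlt : t₁ * q₂ < t₂ * q₁) :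
    ((H : ℝ) + (p : ℝ) * (t₁ : ℝ)) / (q₁ : ℝ) < (p : ℝ) * (t₂ : ℝ) / (q₂ : ℝ) := by
  have hq₁ : (0:ℝ) < (q₁ : ℝ) := by exact_mod_cast lt_of_le_of_lt ht₁ h1
  have hq₂ : (0:ℝ) < (q₂ : ℝ) := by
    have : 0 < q₂ := lt_of_le_of_lt (by nlinarith [mul_pos (lt_of_le_of_lt ht₁ h1) (lt_of_le_of_lt ht₁ h1)] : (0:ℤ) ≤ t₂) h2
    exact_mod_cast this
  rw [div_lt_div_iff₀ hq₁ hq₂]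
  have hstep : (t₁ : ℝ) * (q₂ : ℝ) + 1 ≤ (t₂ : ℝ) * (q₁ : ℝ) := by
    exact_mod_cast (Int.add_one_le_iff.mpr hlt)
  have hHpos : (1:ℝ) ≤ (H : ℝ) := by exact_mod_cast hH
  have hp0 : (0:ℝ) ≤ (p : ℝ) := Nat.cast_nonneg p
  -- H * q₂ ≤ H * X < ... need p > X*H ≥ q₂*H
  nlinarith [mul_le_mul_of_nonneg_left hq₂X (le_trans zero_le_one hHpos),
    mul_le_mul_of_nonneg_left hstep hp0]

theorem intervals_disjoint (p : ℕ) (hp : p.Prime) (H : ℕ) (hH : 0 < H)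
    (X : ℝ) (hX : 1 < X) (hXH : X * (H : ℝ) < (p : ℝ)) :
    (∀ q₁ t₁ q₂ t₂ : ℤ, 0 ≤ t₁ → t₁ < q₁ → (q₁ : ℝ) ≤ X → Int.gcd t₁ q₁ = 1 →
      0 ≤ t₂ → t₂ < q₂ → (q₂ : ℝ) ≤ X → Int.gcd t₂ q₂ = 1 →
      (q₁, t₁) ≠ (q₂, t₂) →
      Disjoint (Set.Ioc ((p : ℝ) * (t₁ : ℝ) / (q₁ : ℝ)) (((H : ℝ) + (p : ℝ) * (t₁ : ℝ)) / (q₁ : ℝ)))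
               (Set.Ioc ((p : ℝ) * (t₂ : ℝ) / (q₂ : ℝ)) (((H : ℝ) + (p : ℝ) * (t₂ : ℝ)) / (q₂ : ℝ))))
    ∧
    (∀ q₁ t₁ q₂ t₂ : ℤ, 0 ≤ t₁ → t₁ < q₁ → (q₁ : ℝ) ≤ X → Int.gcd t₁ q₁ = 1 →
      0 ≤ t₂ → t₂ < q₂ → (q₂ : ℝ) ≤ X → Int.gcd t₂ q₂ = 1 →
      (q₁, t₁) ≠ (q₂, t₂) →
      Disjoint (Set.Ico (-(((H : ℝ) + (p : ℝ) * (t₁ : ℝ)) / (q₁ : ℝ))) (-((p : ℝ) * (t₁ : ℝ) / (q₁ : ℝ))))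
               (Set.Ico (-(((H : ℝ) + (p : ℝ) * (t₂ : ℝ)) / (q₂ : ℝ))) (-((p : ℝ) * (t₂ : ℝ) / (q₂ : ℝ))))) := by
  constructor
  · intro q₁ t₁ q₂ t₂ ht₁ h1 hq₁X hg₁ ht₂ h2 hq₂X hg₂ hne
    have hfne := frac_ne q₁ t₁ q₂ t₂ (lt_of_le_of_lt ht₁ h1) (lt_of_le_of_lt ht₂ h2) hg₁ hg₂ hne
    rw [Set.disjoint_left]
    intro x hx₁ hx₂
    rcases lt_or_gt_of_ne hfne with hlt | hgt
    · have := core p H hH X hXH q₁ t₁ q₂ t₂ ht₁ h1 h2 hq₂X hlt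
      linarith [hx₁.2, hx₂.1]
    · have := core p H hH X hXH q₂ t₂ q₁ t₁ ht₂ h2 h1 hq₁X hgt
      linarith [hx₂.2, hx₁.1]
  · intro q₁ t₁ q₂ t₂ ht₁ h1 hq₁X hg₁ ht₂ h2 hq₂X hg₂ hne
    have hfne := frac_ne q₁ t₁ q₂ t₂ (lt_of_le_of_lt ht₁ h1) (lt_of_le_of_lt ht₂ h2) hg₁ hg₂ hne
    rw [Set.disjoint_left]
    intro x hx₁ hx₂
    rcases lt_or_gt_of_ne hfne with hlt | hgt
    · have := core p H hH X hXH q₁ t₁ q₂ t₂ ht₁ h1 h2 hq₂X hlt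
      linarith [hx₁.1, hx₂.2]
    · have := core p H hH X hXH q₂ t₂ q₁ t₁ ht₂ h2 h1 hq₁X hgt
      linarith [hx₂.1, hx₁.2]
end

section
/- Let h, u be positive integers with u prime and h ≤ u, and let H be a positive integer. Suppose χ is a Dirichlet character modulo a prime p such that χ(n) = 1 for all integers n ∈ [1,H] with gcd(n,u) = 1. Let q, t be integers with 0 ≤ t < q and gcd(q,u) = 1, and let z be an integer lying in I*(q,t) ∪ J*(q,t), where I*(q,t) = ( p·t/q , (H + p·t)/q − h ] and J*(q,t) = [ −(H + p·t)/q , −p·t/q − h ). Then | Σ_{m=0}^{h−1} χ(z+m) | ≥ h − 2. -/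
/-!
Write `n_m = ε q (z + m) - p t` with the sign `ε = ±1` chosen according to the interval containing
`z`; the interval condition gives `1 ≤ n_m ≤ H` for `0 ≤ m < h`. Modulo `p` we have
`n_m ≡ ε q (z + m)`, so `χ(ε q) χ(z + m) = χ(n_m) = 1` whenever `u ∤ n_m`. The `n_m` form an
arithmetic progression of length `h ≤ u` whose difference `ε q` is prime to `u`, so at most one of
them is divisible by `u`. Hence all but at most one summand equal the same unimodular constant,
and the sum has norm at least `(h - 1) - 1`.
-/

open Finset

theorem card_sub_two_mul_card_ne_le_norm_sum {ι E : Type*} [NormedAddCommGroup E] [NormedSpace ℝ E]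
    [DecidableEq E] (s : Finset ι) (f : ι → E) {c : E} (hf : ∀ i ∈ s, ‖f i‖ ≤ 1) (hc : ‖c‖ = 1) :
    (#s : ℝ) - 2 * #{i ∈ s | f i ≠ c} ≤ ‖∑ i ∈ s, f i‖ := by
  have hdev : ‖∑ i ∈ s, (f i - c)‖ ≤ 2 * #{i ∈ s | f i ≠ c} :=
    calc ‖∑ i ∈ s, (f i - c)‖ ≤ ∑ i ∈ s, ‖f i - c‖ := norm_sum_le _ _
      _ = ∑ i ∈ s with f i ≠ c, ‖f i - c‖ := by
          rw [sum_filter_of_ne]; intro i _ hi h; simp [h] at hi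
      _ ≤ ∑ i ∈ s with f i ≠ c, (2 : ℝ) := by
          refine sum_le_sum fun i hi => ?_
          have := hf i (mem_filter.mp hi).1
          linarith [norm_sub_le (f i) c]
      _ = 2 * #{i ∈ s | f i ≠ c} := by rw [sum_const, nsmul_eq_mul, mul_comm]
  have hconst : ‖∑ i ∈ s, c‖ = #s := by
    rw [sum_const, RCLike.norm_nsmul ℝ, hc, nsmul_eq_mul, mul_one]
  have hsplit : ∑ i ∈ s, c = ∑ i ∈ s, f i - ∑ i ∈ s, (f i - c) := by
    rw [sum_sub_distrib]; abel
  rw [hsplit] at hconst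
  linarith [norm_sub_le (∑ i ∈ s, f i) (∑ i ∈ s, (f i - c))]

theorem card_sub_two_le_norm_sum_of_mul_eq_one {ι 𝕜 : Type*} [NormedField 𝕜] [NormedSpace ℝ 𝕜]
    (s : Finset ι) (P : ι → Prop) [DecidablePred P] (f : ι → 𝕜) {b : 𝕜}
    (hf : ∀ i ∈ s, ‖f i‖ ≤ 1) (hb : ‖b‖ ≤ 1) (hP : #{i ∈ s | P i} ≤ 1)
    (hbf : ∀ i ∈ s, ¬ P i → b * f i = 1) :
    (#s : ℝ) - 2 ≤ ‖∑ i ∈ s, f i‖ := by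
  classical
  by_cases hgood : ∃ i ∈ s, ¬ P i
  · obtain ⟨i₀, hi₀, hPi₀⟩ := hgood
    have hbc := hbf i₀ hi₀ hPi₀
    have hnorm : ‖f i₀‖ = 1 := by
      have : ‖b‖ * ‖f i₀‖ = 1 := by rw [← norm_mul, hbc, norm_one]
      nlinarith [hf i₀ hi₀, norm_nonneg b, norm_nonneg (f i₀)]
    have hsub : #{i ∈ s | f i ≠ f i₀} ≤ #{i ∈ s | P i} := by
      refine card_le_card fun i hi => ?_
      rw [mem_filter] at hi ⊢
      refine ⟨hi.1, by_contra fun hPi => hi.2 ?_⟩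
      exact mul_left_cancel₀ (left_ne_zero_of_mul_eq_one hbc) ((hbf i hi.1 hPi).trans hbc.symm)
    have := card_sub_two_mul_card_ne_le_norm_sum s f hf hnorm
    have : (#{i ∈ s | f i ≠ f i₀} : ℝ) ≤ 1 := by exact_mod_cast hsub.trans hP
    linarith
  · push Not at hgood
    have : #s ≤ 1 := by rwa [filter_true_of_mem hgood] at hP
    have : (#s : ℝ) ≤ 1 := by exact_mod_cast this
    linarith [norm_nonneg (∑ i ∈ s, f i)]

theorem card_filter_dvd_add_mul_le_one {u h : ℕ} (hhu : h ≤ u) (a : ℤ) {d : ℤ}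
    (hd : IsCoprime d u) : #{m ∈ range h | (u : ℤ) ∣ a + d * ((m : ℕ) : ℤ)} ≤ 1 := by
  refine card_le_one.mpr fun m hm m' hm' => ?_
  simp only [mem_filter, mem_range] at hm hm'
  have hmu : m < u := by omega
  have hmu' : m' < u := by omega
  have hdiff : (u : ℤ) ∣ d * (m - m') := by
    have := dvd_sub hm.2 hm'.2
    rwa [add_sub_add_left_eq_sub, ← mul_sub] at this
  have := Int.eq_zero_of_abs_lt_dvd (hd.symm.dvd_of_dvd_mul_left hdiff) (by rw [abs_lt]; omega)
  omega

theorem mul_sub_mem_Icc_of_mem_Ioc {q z a H : ℤ} {h : ℕ} (hq : 0 < q)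
    (hz : (z : ℝ) ∈ Set.Ioc ((a : ℝ) / q) ((H + a) / q - h)) {m : ℤ} (hm₀ : 0 ≤ m) (hm : m ≤ h) :
    q * (z + m) - a ∈ Set.Icc 1 H := by
  have hq' : (0 : ℝ) < q := by exact_mod_cast hq
  have hlow : (a : ℝ) < q * z := by rw [mul_comm, ← div_lt_iff₀ hq']; exact hz.1
  have hup : (q : ℝ) * (z + h) ≤ H + a := by rw [mul_comm, ← le_div_iff₀ hq']; linarith [hz.2]
  have hlow' : a < q * z := by exact_mod_cast hlow
  have hup' : q * (z + h) ≤ H + a := by exact_mod_cast hup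
  constructor <;> nlinarith

theorem exists_sign_mul_sub_mem_Icc {q z a H : ℤ} {h : ℕ} (hq : 0 < q)
    (hz : (z : ℝ) ∈ Set.Ioc ((a : ℝ) / q) ((H + a) / q - h) ∨
      (z : ℝ) ∈ Set.Ico (-(((H : ℝ) + a) / q)) (-((a : ℝ) / q) - h)) :
    ∃ ε : ℤ, (ε = 1 ∨ ε = -1) ∧ ∀ m : ℕ, m < h → ε * q * (z + m) - a ∈ Set.Icc 1 H := by
  rcases hz with hI | hJ
  · refine ⟨1, Or.inl rfl, fun m hm => ?_⟩
    simpa using mul_sub_mem_Icc_of_mem_Ioc hq hI (Nat.cast_nonneg m) (by omega)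
  · refine ⟨-1, Or.inr rfl, fun m hm => ?_⟩
    have hI : ((-z - h : ℤ) : ℝ) ∈ Set.Ioc ((a : ℝ) / q) ((H + a) / q - h) := by
      push_cast; constructor <;> linarith [hJ.1, hJ.2]
    have := mul_sub_mem_Icc_of_mem_Ioc hq hI (m := h - m) (by omega) (by omega)
    convert this using 2; ring

theorem DirichletCharacter.eq_one_of_mem_Icc_of_not_dvd {R : Type*} [CommMonoidWithZero R]
    {p u H : ℕ} (χ : DirichletCharacter R p) (hu : u.Prime)
    (hres : ∀ n : ℕ, 1 ≤ n → n ≤ H → Nat.gcd n u = 1 → χ (n : ZMod p) = 1)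
    {n : ℤ} (hn : n ∈ Set.Icc 1 (H : ℤ)) (hun : ¬ (u : ℤ) ∣ n) : χ n = 1 := by
  lift n to ℕ using by linarith [hn.1]
  have hun' : ¬ u ∣ n := by exact_mod_cast hun
  exact_mod_cast hres n (by exact_mod_cast hn.1) (by exact_mod_cast hn.2)
    (Nat.coprime_comm.mp ((hu.coprime_iff_not_dvd).mpr hun'))

theorem char_sum_almost_constant_general (h u : ℕ) (hu : u.Prime) (hhu : h ≤ u)
    (p : ℕ)
    (χ : DirichletCharacter ℂ p)
    (H : ℕ)
    (hres : ∀ n : ℕ, 1 ≤ n → n ≤ H → Nat.gcd n u = 1 → χ (n : ZMod p) = 1)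
    (q t : ℤ) (ht : 0 ≤ t) (htq : t < q) (hqu : Int.gcd q (u : ℤ) = 1)
    (z : ℤ)
    (hz : (z : ℝ) ∈ Set.Ioc ((p : ℝ) * (t : ℝ) / (q : ℝ))
            (((H : ℝ) + (p : ℝ) * (t : ℝ)) / (q : ℝ) - (h : ℝ)) ∨
          (z : ℝ) ∈ Set.Ico (-(((H : ℝ) + (p : ℝ) * (t : ℝ)) / (q : ℝ)))
            (-((p : ℝ) * (t : ℝ) / (q : ℝ)) - (h : ℝ))) :
    (h : ℝ) - 2 ≤ ‖∑ m ∈ Finset.range h, χ ((z : ZMod p) + (m : ZMod p))‖ := by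
  obtain ⟨ε, hε, hmem⟩ := exists_sign_mul_sub_mem_Icc (z := z) (a := p * t) (H := H)
    (h := h) (ht.trans_lt htq) (by push_cast; exact hz)
  have hcop : IsCoprime (ε * q) u := by
    refine IsCoprime.mul_left ?_ (Int.isCoprime_iff_gcd_eq_one.mpr hqu)
    rcases hε with rfl | rfl
    exacts [isCoprime_one_left, isCoprime_one_left.neg_left]
  have hcast (m : ℕ) :
      ((ε * q * (z + m) - p * t : ℤ) : ZMod p) = (ε * q : ℤ) * ((z : ZMod p) + m) := by
    push_cast [ZMod.natCast_self]; ring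
  have hbad : #{m ∈ range h | (u : ℤ) ∣ ε * q * (z + (m : ℕ)) - p * t} ≤ 1 := by
    convert card_filter_dvd_add_mul_le_one hhu (ε * q * z - p * t) hcop using 4; ring
  have hgood (m : ℕ) (hm : m ∈ range h) (hum : ¬ (u : ℤ) ∣ ε * q * (z + m) - p * t) :
      χ (ε * q : ℤ) * χ ((z : ZMod p) + (m : ZMod p)) = 1 := by
    rw [← map_mul, ← hcast]
    exact χ.eq_one_of_mem_Icc_of_not_dvd hu hres (hmem m (mem_range.mp hm)) hum
  simpa using card_sub_two_le_norm_sum_of_mul_eq_one (range h) _ _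
    (fun _ _ => χ.norm_le_one _) (χ.norm_le_one _) hbad hgood

theorem char_sum_almost_constant (h u : ℕ) (hh : 0 < h) (hu : u.Prime) (hhu : h ≤ u)
    (p : ℕ) [Fact p.Prime]
    (χ : DirichletCharacter ℂ p)
    (H : ℕ) (hH : 0 < H)
    (hres : ∀ n : ℕ, 1 ≤ n → n ≤ H → Nat.gcd n u = 1 → χ (n : ZMod p) = 1)
    (q t : ℤ) (ht : 0 ≤ t) (htq : t < q) (hqu : Int.gcd q (u : ℤ) = 1)
    (z : ℤ)
    (hz : (z : ℝ) ∈ Set.Ioc ((p : ℝ) * (t : ℝ) / (q : ℝ))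
            (((H : ℝ) + (p : ℝ) * (t : ℝ)) / (q : ℝ) - (h : ℝ)) ∨
          (z : ℝ) ∈ Set.Ico (-(((H : ℝ) + (p : ℝ) * (t : ℝ)) / (q : ℝ)))
            (-((p : ℝ) * (t : ℝ) / (q : ℝ)) - (h : ℝ))) :
    (h : ℝ) - 2 ≤ ‖∑ m ∈ Finset.range h, χ ((z : ZMod p) + (m : ZMod p))‖ :=
  char_sum_almost_constant_general h u hu hhu p χ H hres q t ht htq hqu z hz
end

section
/- Let X > 1 be a real number and let u be a prime. Then Σ_{n ≤ X, gcd(n,u)=1} n = ((1 − u^{-1})/2)·X² + θ·X for some real number θ with −1 < θ < 1, where the sum is over positive integers n ≤ X coprime to u. Equivalently, | Σ_{n ≤ X, gcd(n,u)=1} n − ((1 − u^{-1})/2)·X² | < X. -/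
private lemma gauss_real (n : ℕ) : ∑ i ∈ Finset.Icc 1 n, (i : ℝ) = n * (n + 1) / 2 := by
  induction n with
  | zero => simp
  | succ k ih =>
    rw [Finset.sum_Icc_succ_top (by omega : 1 ≤ k + 1), ih]
    push_cast
    ring

private lemma est (X a c m : ℝ) (hX : 1 < X) (hc2 : 2 ≤ c) (hm : 0 ≤ m)
    (hNX : a ≤ X) (hXN : X < a + 1) (hba : c * m ≤ a) (hXbc : X < c * (m + 1)) :
    |a * (a + 1) / 2 - c * (m * (m + 1) / 2) - (1 - c⁻¹) / 2 * X ^ 2| < X := by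
  have hc0 : (0 : ℝ) < c := by linarith
  have hb0 : (0 : ℝ) ≤ c * m := mul_nonneg hc0.le hm
  have hXb : X < c * m + c := by nlinarith
  have hE : 2 * c * (a * (a + 1) / 2 - c * (m * (m + 1) / 2) - (1 - c⁻¹) / 2 * X ^ 2)
      = c * a ^ 2 + c * a - (c * m) ^ 2 - (c * m) * c - c * X ^ 2 + X ^ 2 := by
    field_simp
    ring
  rw [abs_lt]
  constructor
  · nlinarith [hE,
      mul_nonneg (mul_nonneg hc0.le (sub_nonneg.mpr hNX)) (by linarith : (0:ℝ) ≤ X + a + 1),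
      mul_nonneg (sub_nonneg.mpr hba) (by linarith : (0:ℝ) ≤ c * m + c - X),
      mul_pos (by linarith : (0:ℝ) < X) (by linarith : (0:ℝ) < c * m + c - X),
      mul_pos (mul_pos hc0 (by linarith : (0:ℝ) < a + 1 - X)) (by linarith : (0:ℝ) < X + a)]
  · nlinarith [hE,
      mul_nonneg (mul_nonneg hc0.le (sub_nonneg.mpr hNX)) (by linarith : (0:ℝ) ≤ X + a + 1),
      mul_nonneg (by linarith : (0:ℝ) ≤ X - c * m) (by linarith : (0:ℝ) ≤ X + c * m + c),
      mul_nonneg (sub_nonneg.mpr hba) (by linarith : (0:ℝ) ≤ c * m + c - X),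
      mul_pos (by linarith : (0:ℝ) < X) (by linarith : (0:ℝ) < c * m + c - X),
      mul_pos (mul_pos hc0 (by linarith : (0:ℝ) < a + 1 - X)) (by linarith : (0:ℝ) < X + a)]

theorem sum_coprime_estimate (X : ℝ) (hX : 1 < X) (u : ℕ) (hu : u.Prime) :
    |(∑ n ∈ (Finset.Icc 1 ⌊X⌋₊).filter (fun n => Nat.gcd n u = 1), (n : ℝ)) -
        ((1 - (u : ℝ)⁻¹) / 2) * X ^ 2| < X := by
  have hX0 : (0 : ℝ) < X := by linarith
  set N := ⌊X⌋₊ with hNdef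
  set M := N / u with hMdef
  have hu0 : 0 < u := hu.pos
  have hu2 : 2 ≤ u := hu.two_le
  have hfilt : (Finset.Icc 1 N).filter (fun n => ¬ Nat.gcd n u = 1)
      = (Finset.Icc 1 N).filter (fun n => u ∣ n) := by
    apply Finset.filter_congr
    intro n _
    constructor
    · intro h
      by_contra hdvd
      exact h (Nat.coprime_comm.mp ((hu.coprime_iff_not_dvd).mpr hdvd))
    · intro hdvd h
      exact (hu.coprime_iff_not_dvd).mp (Nat.coprime_comm.mp h) hdvd
  have hmult : ∑ n ∈ (Finset.Icc 1 N).filter (fun n => u ∣ n), (n : ℝ)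
      = u * ∑ m ∈ Finset.Icc 1 M, (m : ℝ) := by
    rw [Finset.mul_sum]
    refine Finset.sum_nbij' (fun n => n / u) (fun m => u * m) ?_ ?_ ?_ ?_ ?_
    · intro n hn
      simp only [Finset.mem_filter, Finset.mem_Icc] at hn
      simp only [Finset.mem_Icc]
      obtain ⟨⟨h1, h2⟩, hd⟩ := hn
      constructor
      · exact (Nat.one_le_div_iff hu0).mpr (Nat.le_of_dvd (by omega) hd)
      · exact Nat.div_le_div_right h2
    · intro m hm
      simp only [Finset.mem_Icc] at hm
      simp only [Finset.mem_filter, Finset.mem_Icc]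
      refine ⟨⟨?_, ?_⟩, Dvd.intro m rfl⟩
      · have := Nat.mul_le_mul hu0 hm.1
        omega
      · calc u * m ≤ u * M := Nat.mul_le_mul_left u hm.2
          _ ≤ N := Nat.mul_div_le N u
    · intro n hn
      simp only [Finset.mem_filter] at hn
      exact Nat.mul_div_cancel' hn.2
    · intro m _
      exact Nat.mul_div_cancel_left m hu0
    · intro n hn
      simp only [Finset.mem_filter] at hn
      exact_mod_cast (Nat.mul_div_cancel' hn.2).symm
  have hsum : (∑ n ∈ (Finset.Icc 1 N).filter (fun n => Nat.gcd n u = 1), (n : ℝ))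
      = (N : ℝ) * ((N : ℝ) + 1) / 2 - (u : ℝ) * ((M : ℝ) * ((M : ℝ) + 1) / 2) := by
    have hsplit := Finset.sum_filter_add_sum_filter_not (Finset.Icc 1 N)
      (fun n => Nat.gcd n u = 1) (fun n => (n : ℝ))
    rw [hfilt, hmult, gauss_real M] at hsplit
    have hg := gauss_real N
    linarith [hsplit, hg]
  rw [hsum]
  have hMN : u * M ≤ N := Nat.mul_div_le N u
  have hNM : N < u * (M + 1) := Nat.lt_mul_div_succ N hu0
  have h1 : (1 - (u : ℝ)⁻¹) / 2 * X ^ 2 = (1 - (u : ℝ)⁻¹) / 2 * X ^ 2 := rfl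
  refine est X (N : ℝ) (u : ℝ) (M : ℝ) hX ?_ ?_ ?_ ?_ ?_ ?_
  · exact_mod_cast hu2
  · positivity
  · exact Nat.floor_le hX0.le
  · exact_mod_cast Nat.lt_floor_add_one X
  · exact_mod_cast hMN
  · have h2 : (N : ℝ) + 1 ≤ (u : ℝ) * ((M : ℝ) + 1) := by exact_mod_cast hNM
    have h3 : X < (N : ℝ) + 1 := by exact_mod_cast Nat.lt_floor_add_one X
    linarith
end

section
/- Let X > 1 be a real number and let u be a prime. Then Σ_{1 ≤ m ≤ X, gcd(m,u)=1} μ(m)/m² ≥ 6/π² − 1/X² − 1/X, where μ is the Möbius function and the sum is over positive integers m ≤ X coprime to u. -/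
/-!
Write `g(m) = μ(m) / m²` if `m` is coprime to the prime `p` and `0` otherwise. Multiplicativity of
`μ` gives `μ(p k) = -μ(k)` for `k` coprime to `p` and `μ(p k) = 0` otherwise, so the multiples of
`p` contribute `-p⁻² ∑ g` to `∑ μ(m) / m² = 1 / ζ(2) = 6 / π²`; hence `∑ g = (1 - p⁻²)⁻¹ · 6 / π²`,
which is at least `6 / π²`. Since `|g(m)| ≤ 1 / m²`, the terms `m > X` add up to at most
`1 / (N + 1)² + 1 / (N + 1)` with `N = ⌊X⌋`, comparing all but the first with the telescoping
series `∑ (1 / (k - 1) - 1 / k)`.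
-/

open ArithmeticFunction Finset

open scoped ArithmeticFunction.Moebius

lemma one_div_sq_le_one_div_sub_one_div {t : ℝ} (ht : 0 < t) :
    1 / (t + 1) ^ 2 ≤ 1 / t - 1 / (t + 1) := by
  rw [div_sub_div _ _ ht.ne' (by positivity), div_le_div_iff₀ (by positivity) (by positivity)]
  nlinarith

lemma summable_one_div_nat_add_sq (n : ℕ) : Summable fun k : ℕ => 1 / ((k : ℝ) + n) ^ 2 := by
  exact_mod_cast (summable_nat_add_iff n).mpr (Real.summable_one_div_nat_pow.mpr one_lt_two)

lemma tsum_one_div_nat_add_sq_le {n : ℕ} (hn : 0 < n) :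
    ∑' k : ℕ, 1 / ((k : ℝ) + n) ^ 2 ≤ 1 / (n : ℝ) ^ 2 + 1 / n := by
  rw [(summable_one_div_nat_add_sq n).tsum_eq_zero_add]
  have htail : ∑' k : ℕ, 1 / (((k + 1 : ℕ) : ℝ) + n) ^ 2 ≤ 1 / (n : ℝ) := by
    refine Real.tsum_le_of_sum_range_le (fun _ => by positivity) fun M => ?_
    calc ∑ k ∈ range M, 1 / (((k + 1 : ℕ) : ℝ) + n) ^ 2
        ≤ ∑ k ∈ range M, (1 / ((k : ℝ) + n) - 1 / (((k + 1 : ℕ) : ℝ) + n)) := by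
          refine sum_le_sum fun k _ => ?_
          have := one_div_sq_le_one_div_sub_one_div (t := k + n) (by positivity)
          rwa [Nat.cast_succ, add_right_comm]
      _ = 1 / n - 1 / ((M : ℝ) + n) := by
          simpa using sum_range_sub' (fun k : ℕ => 1 / ((k : ℝ) + n)) M
      _ ≤ 1 / (n : ℝ) := by
          have : 0 ≤ 1 / ((M : ℝ) + n) := by positivity
          linarith
  simpa using htail

section BoundedCoefficients

variable {a : ℕ → ℝ}

lemma summable_div_sq_of_abs_le_one (ha : ∀ m, |a m| ≤ 1) :
    Summable fun m => a m / (m : ℝ) ^ 2 := by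
  refine (Real.summable_one_div_nat_pow.mpr one_lt_two).of_norm_bounded fun m => ?_
  rw [Real.norm_eq_abs, abs_div, abs_of_nonneg (sq_nonneg (m : ℝ))]
  exact div_le_div_of_nonneg_right (ha m) (sq_nonneg _)

lemma tsum_div_sq_sub_sum_range_le (ha : ∀ m, |a m| ≤ 1) {n : ℕ} (hn : 0 < n) :
    ∑' m, a m / (m : ℝ) ^ 2 - ∑ m ∈ range n, a m / (m : ℝ) ^ 2 ≤ 1 / (n : ℝ) ^ 2 + 1 / n := by
  have hsum := summable_div_sq_of_abs_le_one ha
  rw [← hsum.sum_add_tsum_nat_add n, add_sub_cancel_left]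
  calc ∑' k, a (k + n) / ((k + n : ℕ) : ℝ) ^ 2 ≤ ∑' k : ℕ, 1 / ((k : ℝ) + n) ^ 2 := by
        refine Summable.tsum_le_tsum (fun k => ?_) ((summable_nat_add_iff n).mpr hsum)
          (summable_one_div_nat_add_sq n)
        exact_mod_cast div_le_div_of_nonneg_right (le_of_abs_le (ha (k + n)))
          (sq_nonneg ((k + n : ℕ) : ℝ))
    _ ≤ 1 / (n : ℝ) ^ 2 + 1 / n := tsum_one_div_nat_add_sq_le hn

end BoundedCoefficients

lemma abs_moebius_real_le_one (m : ℕ) : |(μ m : ℝ)| ≤ 1 := by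
  exact_mod_cast abs_moebius_le_one

lemma tsum_moebius_div_sq : ∑' m : ℕ, (μ m : ℝ) / (m : ℝ) ^ 2 = 6 / Real.pi ^ 2 := by
  have hterm (n : ℕ) :
      LSeries.term (fun n => (μ n : ℂ)) 2 n = (((μ n : ℝ) / (n : ℝ) ^ 2 : ℝ) : ℂ) := by
    rcases eq_or_ne n 0 with rfl | hn
    · simp
    · rw [LSeries.term_of_ne_zero hn, ← Nat.cast_ofNat, Complex.cpow_natCast]
      push_cast
      ring
  have hL : LSeries (fun n => (μ n : ℂ)) 2 = 6 / (Real.pi : ℂ) ^ 2 := by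
    have h := LSeries_zeta_mul_Lseries_moebius (s := 2) (by norm_num)
    rw [LSeries_zeta_eq_riemannZeta (by norm_num), riemannZeta_two] at h
    have hpi : (Real.pi : ℂ) ≠ 0 := Complex.ofReal_ne_zero.mpr Real.pi_ne_zero
    field_simp at h ⊢
    linear_combination h
  apply Complex.ofReal_injective
  rw [Complex.ofReal_tsum]
  simp_rw [← hterm]
  rw [← LSeries, hL]
  push_cast
  ring

lemma moebius_prime_mul {p : ℕ} (hp : p.Prime) (k : ℕ) :
    μ (p * k) = if k.Coprime p then -μ k else 0 := by
  split_ifs with hk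
  · rw [isMultiplicative_moebius.map_mul_of_coprime hk.symm, moebius_apply_prime hp, neg_one_mul]
  · exact moebius_eq_zero_of_not_squarefree fun h => hk (Nat.squarefree_mul_iff.mp h).1.symm

noncomputable def moebiusCoprimeTo (p m : ℕ) : ℝ := if m.Coprime p then (μ m : ℝ) else 0

lemma moebiusCoprimeTo_of_coprime {p m : ℕ} (h : m.Coprime p) : moebiusCoprimeTo p m = μ m :=
  if_pos h

lemma moebiusCoprimeTo_of_not_coprime {p m : ℕ} (h : ¬m.Coprime p) : moebiusCoprimeTo p m = 0 :=
  if_neg h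

lemma abs_moebiusCoprimeTo_le_one (p m : ℕ) : |moebiusCoprimeTo p m| ≤ 1 := by
  by_cases h : m.Coprime p
  · rw [moebiusCoprimeTo_of_coprime h]; exact abs_moebius_real_le_one m
  · rw [moebiusCoprimeTo_of_not_coprime h, abs_zero]; exact zero_le_one

lemma moebius_prime_mul_div_sq {p : ℕ} (hp : p.Prime) (k : ℕ) :
    (μ (p * k) : ℝ) / ((p * k : ℕ) : ℝ) ^ 2 =
      -(1 / (p : ℝ) ^ 2) * (moebiusCoprimeTo p k / (k : ℝ) ^ 2) := by
  rw [moebius_prime_mul hp]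
  by_cases hk : k.Coprime p
  · rw [if_pos hk, moebiusCoprimeTo_of_coprime hk]; push_cast; ring
  · rw [if_neg hk, moebiusCoprimeTo_of_not_coprime hk]; simp

lemma tsum_moebius_div_sq_eq_mul_tsum_moebiusCoprimeTo {p : ℕ} (hp : p.Prime) :
    ∑' m : ℕ, (μ m : ℝ) / (m : ℝ) ^ 2 =
      (1 - 1 / (p : ℝ) ^ 2) * ∑' m : ℕ, moebiusCoprimeTo p m / (m : ℝ) ^ 2 := by
  have hsupp : Function.support
      (fun m : ℕ => (μ m : ℝ) / (m : ℝ) ^ 2 - moebiusCoprimeTo p m / (m : ℝ) ^ 2) ⊆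
      Set.range (p * ·) := by
    intro m hm
    by_contra hdvd
    have hcop : m.Coprime p :=
      (hp.coprime_iff_not_dvd.mpr fun ⟨k, hk⟩ => hdvd ⟨k, hk.symm⟩).symm
    exact hm (by simp [moebiusCoprimeTo_of_coprime hcop])
  have hvanish (k : ℕ) : moebiusCoprimeTo p (p * k) = 0 :=
    moebiusCoprimeTo_of_not_coprime fun h => hp.coprime_iff_not_dvd.mp h.coprime_mul_right dvd_rfl
  have hdiff : ∑' m : ℕ, (μ m : ℝ) / (m : ℝ) ^ 2 - ∑' m, moebiusCoprimeTo p m / (m : ℝ) ^ 2 =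
      -(1 / (p : ℝ) ^ 2) * ∑' m, moebiusCoprimeTo p m / (m : ℝ) ^ 2 := by
    rw [← Summable.tsum_sub (summable_div_sq_of_abs_le_one abs_moebius_real_le_one)
      (summable_div_sq_of_abs_le_one (abs_moebiusCoprimeTo_le_one p)),
      ← (mul_right_injective₀ hp.ne_zero).tsum_eq hsupp]
    simp only [hvanish, zero_div, sub_zero, moebius_prime_mul_div_sq hp, tsum_mul_left]
  linear_combination hdiff

lemma six_div_pi_sq_le_tsum_moebiusCoprimeTo {p : ℕ} (hp : p.Prime) :
    6 / Real.pi ^ 2 ≤ ∑' m : ℕ, moebiusCoprimeTo p m / (m : ℝ) ^ 2 := by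
  have hS := tsum_moebius_div_sq_eq_mul_tsum_moebiusCoprimeTo hp
  rw [tsum_moebius_div_sq] at hS
  set S := ∑' m : ℕ, moebiusCoprimeTo p m / (m : ℝ) ^ 2
  have hp2 : 1 < (p : ℝ) ^ 2 := by exact_mod_cast Nat.one_lt_pow two_ne_zero hp.one_lt
  have hc : 0 < 1 / (p : ℝ) ^ 2 := one_div_pos.mpr (by linarith)
  have hc' : 1 / (p : ℝ) ^ 2 < 1 := (div_lt_one (by linarith)).mpr hp2
  have hS_pos : 0 < S := pos_of_mul_pos_right (hS ▸ by positivity : 0 < (1 - 1 / (p : ℝ) ^ 2) * S)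
    (by linarith)
  nlinarith [mul_pos hc hS_pos]

theorem moebius_sum_lower_bound (X : ℝ) (hX : 1 < X) (u : ℕ) (hu : u.Prime) :
    6 / Real.pi ^ 2 - 1 / X ^ 2 - 1 / X ≤
      ∑ m ∈ (Finset.Icc 1 ⌊X⌋₊).filter (fun m => Nat.gcd m u = 1),
        ((ArithmeticFunction.moebius m : ℝ) / (m : ℝ) ^ 2) := by
  set N := ⌊X⌋₊
  have hsum : ∑ m ∈ (Icc 1 N).filter (fun m => Nat.gcd m u = 1), (μ m : ℝ) / (m : ℝ) ^ 2 =
      ∑ m ∈ range (N + 1), moebiusCoprimeTo u m / (m : ℝ) ^ 2 := by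
    rw [sum_filter, range_eq_Ico, sum_eq_sum_Ico_succ_bot N.succ_pos, Nat.succ_eq_add_one,
      zero_add, Ico_add_one_right_eq_Icc]
    simp only [moebiusCoprimeTo, ite_div, zero_div, Nat.cast_zero, zero_pow two_ne_zero, div_zero,
      zero_add]
  have hX0 : 0 < X := by linarith
  have hXN : X ≤ ((N + 1 : ℕ) : ℝ) := by push_cast; exact (Nat.lt_floor_add_one X).le
  have hbound : 1 / ((N + 1 : ℕ) : ℝ) ^ 2 + 1 / ((N + 1 : ℕ) : ℝ) ≤ 1 / X ^ 2 + 1 / X := by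
    gcongr
  have htail := tsum_div_sq_sub_sum_range_le (abs_moebiusCoprimeTo_le_one u) N.succ_pos
  linarith [six_div_pi_sq_le_tsum_moebiusCoprimeTo hu]
end

section
/- Let χ be a non-principal Dirichlet character modulo a prime p ≥ 5, and let q_1 < q_2 be the two smallest prime non-residues of χ. Assume q_1 ≠ 2 or q_2 ≠ 3. Let S be the maximal number of consecutive integers on which χ takes the same value, i.e., the largest integer S such that there exists an integer x with χ(x) = χ(x+1) = ⋯ = χ(x+S−1). Then q_2 ≤ S·q_1 + 1. -/
/-!
Every prime below `q₂` other than `q₁` is a residue, hence `χ n = 1` for every `0 < n < q₂`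
prime to `q₁`. Here `q₂ < p`: if all primes below `p` other than `q` were residues, a congruence
`q m ≡ j (mod p)` with `m, j ∈ (0, p)` prime to `q` (available once `p ≥ 5`) would give `χ q = 1`.
If `S q₁ + 1 < q₂`, take `x ≡ q₁⁻¹ (mod p)`; then `q₁ (x + j) ≡ 1 + j q₁` for `j = 0, …, S`, so
`χ (x + j) = (χ q₁)⁻¹` on `S + 1` consecutive integers, contradicting the maximality of `S`.
-/

theorem ZMod.exists_natCast_mul_eq_of_coprime {p q : ℕ} (hp : 5 ≤ p) (hq : 2 ≤ q)
    (hqp : q.Coprime p) :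
    ∃ m j : ℕ, 0 < m ∧ m < p ∧ 0 < j ∧ j < p ∧ ¬ q ∣ m ∧ ¬ q ∣ j ∧
      ((q * m : ℕ) : ZMod p) = j := by
  have hq_dvd : ¬ q ∣ p := fun h => by have := hqp.eq_one_of_dvd h; omega
  rcases lt_trichotomy (2 * q) p with h2q | h2q | h2q
  · obtain ⟨k, hk1, hk2, hkq⟩ : ∃ k, 1 ≤ k ∧ k ≤ 2 ∧ ¬ q ∣ p - k := by
      by_cases h1 : q ∣ p - 1
      · refine ⟨2, by omega, le_rfl, fun h2 => ?_⟩
        have h12 := Nat.dvd_sub h1 h2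
        rw [show p - 1 - (p - 2) = 1 by omega, Nat.dvd_one] at h12
        omega
      · exact ⟨1, le_rfl, by omega, h1⟩
    have hqk : q ≤ q * k ∧ q * k ≤ 2 * q := ⟨Nat.le_mul_of_pos_right q hk1, by nlinarith⟩
    refine ⟨p - k, p - q * k, by omega, by omega, by omega, by omega, hkq, fun h => hq_dvd ?_, ?_⟩
    · simpa [Nat.sub_add_cancel (by omega : q * k ≤ p)] using Nat.dvd_add h (dvd_mul_right q k)
    · push_cast [Nat.cast_sub (by omega : k ≤ p), Nat.cast_sub (by omega : q * k ≤ p)]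
      simp
  · exact absurd ⟨2, by omega⟩ hq_dvd
  · rcases lt_or_gt_of_ne (show q ≠ p by rintro rfl; exact hq_dvd dvd_rfl) with hqp' | hpq
    · refine ⟨2, 2 * q - p, by omega, by omega, by omega, by omega, fun h => ?_,
        Nat.not_dvd_of_pos_of_lt (by omega) (by omega), ?_⟩
      · have := Nat.le_of_dvd two_pos h; omega
      · push_cast [Nat.cast_sub h2q.le]
        simp [mul_comm]
    · have hmod : 0 < q % p := Nat.pos_of_ne_zero fun h =>
        by have := hqp.symm.eq_one_of_dvd (Nat.dvd_of_mod_eq_zero h); omega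
      exact ⟨1, q % p, one_pos, by omega, hmod, Nat.mod_lt q (by omega),
        Nat.not_dvd_of_pos_of_lt one_pos (by omega),
        Nat.not_dvd_of_pos_of_lt hmod ((Nat.mod_lt q (by omega)).trans hpq), by simp⟩

namespace DirichletCharacter

variable {R : Type*} [CommMonoidWithZero R]

theorem apply_natCast_eq_one_of_not_dvd {N : ℕ} (χ : DirichletCharacter R N) {q B : ℕ}
    (h : ∀ ℓ : ℕ, ℓ.Prime → ℓ < B → ℓ ≠ q → χ ℓ = 1) {n : ℕ} (hn : 0 < n) (hnB : n < B)
    (hqn : ¬ q ∣ n) : χ n = 1 := by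
  induction n using Nat.recOnMul with
  | zero => exact absurd hn (lt_irrefl 0)
  | one => simp
  | prime ℓ hℓ => exact h ℓ hℓ hnB fun hℓq => hqn (hℓq ▸ dvd_rfl)
  | mul a b ha hb =>
    have ha0 : 0 < a := Nat.pos_of_mul_pos_right hn
    have hb0 : 0 < b := Nat.pos_of_mul_pos_left hn
    rw [Nat.cast_mul, map_mul,
      ha ha0 ((Nat.le_mul_of_pos_right a hb0).trans_lt hnB) fun h => hqn (h.mul_right b),
      hb hb0 ((Nat.le_mul_of_pos_left b ha0).trans_lt hnB) fun h => hqn (h.mul_left a), one_mul]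

theorem apply_natCast_ne_zero [Nontrivial R] {p : ℕ} [Fact p.Prime] (χ : DirichletCharacter R p)
    {n : ℕ} (hn : 0 < n) (hnp : n < p) : χ n ≠ 0 :=
  MulChar.apply_ne_zero_iff.mpr <| isUnit_iff_ne_zero.mpr fun h =>
    Nat.not_dvd_of_pos_of_lt hn hnp <| (ZMod.natCast_eq_zero_iff n p).mp h

theorem exists_run_of_apply_one_add_mul_eq_one {N : ℕ} (χ : DirichletCharacter R N) {q k : ℕ}
    (hq : IsUnit (q : ZMod N)) (h : ∀ j ≤ k, χ (1 + j * q : ℕ) = 1) :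
    ∃ x : ℤ, ∀ i : ℕ, i < k + 1 → χ ((x + i : ℤ) : ZMod N) = χ ((x : ℤ) : ZMod N) := by
  obtain ⟨x, hx⟩ := ZMod.intCast_surjective (hq.unit⁻¹ : (ZMod N)ˣ).val
  have hqx : (q : ZMod N) * x = 1 := by rw [hx, IsUnit.mul_val_inv]
  have key : ∀ j ≤ k, χ q * χ ((x + j : ℤ) : ZMod N) = 1 := fun j hj => by
    rw [← map_mul, ← h j hj]
    push_cast
    rw [mul_add, hqx, mul_comm]
  refine ⟨x, fun i hi => inv_unique (key i (by omega)) ?_⟩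
  simpa using key 0 (Nat.zero_le k)

theorem exists_prime_lt_ne_apply_notMem [Nontrivial R] {p : ℕ} [Fact p.Prime] (hp : 5 ≤ p)
    (χ : DirichletCharacter R p) {q : ℕ} (hq : χ q ∉ ({0, 1} : Set R)) :
    ∃ ℓ : ℕ, ℓ.Prime ∧ ℓ < p ∧ ℓ ≠ q ∧ χ ℓ ∉ ({0, 1} : Set R) := by
  simp only [Set.mem_insert_iff, Set.mem_singleton_iff, not_or] at hq ⊢
  obtain ⟨hq0, hq1⟩ := hq
  have hqp : q.Coprime p := (ZMod.isUnit_iff_coprime q p).mp (MulChar.apply_ne_zero_iff.mp hq0)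
  have hq2 : 2 ≤ q := by
    rcases Nat.lt_or_ge q 2 with h | h
    · interval_cases q <;> simp_all
    · exact h
  by_contra! hall
  have hres : ∀ ℓ : ℕ, ℓ.Prime → ℓ < p → ℓ ≠ q → χ ℓ = 1 := fun ℓ hℓ hℓp hℓq =>
    hall ℓ hℓ hℓp hℓq (χ.apply_natCast_ne_zero hℓ.pos hℓp)
  obtain ⟨m, j, hm0, hmp, hj0, hjp, hqm, hqj, hmj⟩ :=
    ZMod.exists_natCast_mul_eq_of_coprime hp hq2 hqp
  apply hq1
  calc χ q = χ q * χ m := by rw [χ.apply_natCast_eq_one_of_not_dvd hres hm0 hmp hqm, mul_one]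
    _ = 1 := by rw [← map_mul, ← Nat.cast_mul, hmj,
      χ.apply_natCast_eq_one_of_not_dvd hres hj0 hjp hqj]

end DirichletCharacter

theorem hudson_lemma_general (p : ℕ) [Fact p.Prime] (hp : 5 ≤ p)
    (χ : DirichletCharacter ℂ p)
    (q₁ q₂ : ℕ)
    (hnr₁ : χ (q₁ : ZMod p) ∉ ({0, 1} : Set ℂ))
    (hmin₂ : ∀ q : ℕ, q.Prime → χ (q : ZMod p) ∉ ({0, 1} : Set ℂ) → q ≠ q₁ → q₂ ≤ q)
    (S : ℕ)
    (hmaxrun : ¬ ∃ x : ℤ, ∀ i : ℕ, i < S + 1 → χ ((x + i : ℤ) : ZMod p) = χ ((x : ℤ) : ZMod p)) :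
    q₂ ≤ S * q₁ + 1 := by
  obtain ⟨ℓ, hℓ, hℓp, hℓq₁, hℓnr⟩ := χ.exists_prime_lt_ne_apply_notMem hp hnr₁
  have hq₂p : q₂ < p := (hmin₂ ℓ hℓ hℓnr hℓq₁).trans_lt hℓp
  have hres : ∀ ℓ : ℕ, ℓ.Prime → ℓ < q₂ → ℓ ≠ q₁ → χ ℓ = 1 := fun ℓ hℓ hℓq₂ hℓq₁ => by
    by_contra hℓ1
    have hℓ0 := χ.apply_natCast_ne_zero hℓ.pos (hℓq₂.trans hq₂p)
    exact (hmin₂ ℓ hℓ (by simp [hℓ0, hℓ1]) hℓq₁).not_gt hℓq₂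
  have hq₁unit : IsUnit (q₁ : ZMod p) :=
    (MulChar.apply_ne_zero_iff (χ := χ)).mp fun h => hnr₁ (by simp [h])
  have hq₁one : q₁ ≠ 1 := by rintro rfl; simp at hnr₁
  by_contra! hlarge
  refine hmaxrun (χ.exists_run_of_apply_one_add_mul_eq_one hq₁unit fun j hj => ?_)
  refine χ.apply_natCast_eq_one_of_not_dvd hres (by omega) ?_ fun h => hq₁one ?_
  · have := Nat.mul_le_mul_right q₁ hj
    omega
  · exact Nat.dvd_one.mp ((Nat.dvd_add_left (dvd_mul_left q₁ j)).mp h)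

theorem hudson_lemma (p : ℕ) [Fact p.Prime] (hp : 5 ≤ p)
    (χ : DirichletCharacter ℂ p) (hχ : χ ≠ 1)
    (q₁ q₂ : ℕ) (hq₁ : q₁.Prime) (hq₂ : q₂.Prime) (hlt : q₁ < q₂)
    (hnr₁ : χ (q₁ : ZMod p) ∉ ({0, 1} : Set ℂ))
    (hnr₂ : χ (q₂ : ZMod p) ∉ ({0, 1} : Set ℂ))
    (hmin₁ : ∀ q : ℕ, q.Prime → χ (q : ZMod p) ∉ ({0, 1} : Set ℂ) → q₁ ≤ q)
    (hmin₂ : ∀ q : ℕ, q.Prime → χ (q : ZMod p) ∉ ({0, 1} : Set ℂ) → q ≠ q₁ → q₂ ≤ q)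
    (hne : q₁ ≠ 2 ∨ q₂ ≠ 3)
    (S : ℕ)
    (hrun : ∃ x : ℤ, ∀ i : ℕ, i < S → χ ((x + i : ℤ) : ZMod p) = χ ((x : ℤ) : ZMod p))
    (hmaxrun : ¬ ∃ x : ℤ, ∀ i : ℕ, i < S + 1 → χ ((x + i : ℤ) : ZMod p) = χ ((x : ℤ) : ZMod p)) :
    q₂ ≤ S * q₁ + 1 :=
  hudson_lemma_general p hp χ q₁ q₂ hnr₁ hmin₂ S hmaxrun
end
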